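/- arXiv:1605.09342 — 5 statements merged into one kernel-verified Lean document; each statement's English description precedes it below -/
import Mathlib

section
/- Over Z/2, for any integer n, Σ_{a+b=n, a,b ≥ 1} e_a ∧ δ₁(e_b) = 0 in the exterior algebra, where δ₁(e_i) = Σ_{c+d=i, 1≤c<d} (c+d) e_c ∧ e_d with coefficients mod 2. -/
noncomputable section

/-- Ground field `Z/2`. -/
abbrev K2 := ZMod 2

/-- The free `Z/2`-module on basis `(e_i)_{i ≥ 1}`. -/
abbrev V1 := {i : ℕ // 1 ≤ i} →₀ K2

/-- The exterior algebra over `Z/2` on the space with basis `(e_i)_{i ≥ 1}`. -/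
abbrev Lam1 := ExteriorAlgebra K2 V1

/-- The generator `e_i` (defined to be `0` for the irrelevant case `i = 0`). -/
noncomputable def E (i : ℕ) : Lam1 :=
  if h : 1 ≤ i then ExteriorAlgebra.ι K2 (Finsupp.single (⟨i, h⟩ : {i : ℕ // 1 ≤ i}) 1)
  else 0

/-- The coboundary of a generator:
`δ₁(e_i) = Σ_{a+b=i, 1 ≤ a < b} (a+b) e_a ∧ e_b`, coefficients mod 2. -/
noncomputable def δE (i : ℕ) : Lam1 :=
  ∑ a ∈ Finset.Ico 1 i, if a < i - a then (i : K2) • (E a * E (i - a)) else 0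

/-! ### Auxiliary lemmas -/

lemma lam_add_self (x : Lam1) : x + x = 0 := by
  have h : (2 : K2) • x = x + x := two_smul K2 x
  have h2 : (2 : K2) = 0 := by decide
  rw [← h, h2, zero_smul]

lemma iota_comm (x y : V1) :
    (ExteriorAlgebra.ι K2 x : Lam1) * ExteriorAlgebra.ι K2 y
      = ExteriorAlgebra.ι K2 y * ExteriorAlgebra.ι K2 x := by
  have h := ExteriorAlgebra.ι_add_mul_swap (R := K2) x y
  have h2 : (ExteriorAlgebra.ι K2 x : Lam1) * ExteriorAlgebra.ι K2 y
      + ExteriorAlgebra.ι K2 x * ExteriorAlgebra.ι K2 y = 0 := lam_add_self _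
  have h3 := h.trans h2.symm
  exact (add_left_cancel h3).symm

lemma E_comm (i j : ℕ) : E i * E j = E j * E i := by
  unfold E
  split_ifs with hi hj hj
  · exact iota_comm _ _
  · simp
  · simp
  · simp

lemma E_mul_self (i : ℕ) : E i * E i = 0 := by
  unfold E
  split_ifs with hi
  · exact ExteriorAlgebra.ι_sq_zero _
  · simp

lemma E_swap12 (x y z : ℕ) : E x * (E y * E z) = E y * (E x * E z) := by
  rw [← mul_assoc, E_comm x y, mul_assoc]

lemma E_swap23 (x y z : ℕ) : E x * (E y * E z) = E x * (E z * E y) :=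
  congrArg (E x * ·) (E_comm y z)

lemma E_perm_cad (a c d : ℕ) : E c * (E a * E d) = E a * (E c * E d) :=
  E_swap12 c a d

lemma E_perm_cda (a c d : ℕ) : E c * (E d * E a) = E a * (E c * E d) :=
  calc E c * (E d * E a) = E c * (E a * E d) := E_swap23 c d a
    _ = E a * (E c * E d) := E_swap12 c a d

lemma E_perm_dac (a c d : ℕ) : E d * (E a * E c) = E a * (E c * E d) :=
  calc E d * (E a * E c) = E a * (E d * E c) := E_swap12 d a c
    _ = E a * (E c * E d) := E_swap23 a d c

lemma E_perm_dca (a c d : ℕ) : E d * (E c * E a) = E a * (E c * E d) :=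
  calc E d * (E c * E a) = E c * (E d * E a) := E_swap12 d c a
    _ = E a * (E c * E d) := E_perm_cda a c d

lemma E_triple_zero {a c d : ℕ} (h : a = c ∨ a = d ∨ c = d) :
    E a * (E c * E d) = 0 := by
  rcases h with h | h | h
  · subst h; rw [← mul_assoc, E_mul_self, zero_mul]
  · subst h; rw [E_swap23, ← mul_assoc, E_mul_self, zero_mul]
  · subst h; rw [E_mul_self, mul_zero]

lemma odd_cast {m : ℕ} (h : m % 2 = 1) : (m : K2) = 1 := by
  have := ZMod.natCast_mod m 2
  rw [h] at this
  simpa using this.symm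

lemma even_cast {m : ℕ} (h : m % 2 = 0) : (m : K2) = 0 := by
  have := ZMod.natCast_mod m 2
  rw [h] at this
  simpa using this.symm

/-- The predicate singling out the (potentially) nonzero terms. -/
def Pn (n : ℕ) (p : ℕ × ℕ) : Prop :=
  (n - p.1) % 2 = 1 ∧ p.2 < n - p.1 - p.2 ∧ p.1 ≠ p.2 ∧ p.1 ≠ n - p.1 - p.2

instance (n : ℕ) : DecidablePred (Pn n) := fun p => by
  unfold Pn; infer_instance

/-- The pairing involution. -/
def gn (n : ℕ) (p : ℕ × ℕ) : ℕ × ℕ :=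
  if Pn n p then
    (if p.1 % 2 = p.2 % 2 then (p.2, min p.1 (n - p.1 - p.2))
     else (n - p.1 - p.2, min p.1 p.2))
  else p

/-- The summand. -/
noncomputable def fn (n : ℕ) (p : ℕ × ℕ) : Lam1 :=
  if p.2 < n - p.1 - p.2 then
    ((n - p.1 : ℕ) : K2) • (E p.1 * (E p.2 * E (n - p.1 - p.2)))
  else 0

lemma fn_eq_zero {n : ℕ} {p : ℕ × ℕ} (h : ¬ Pn n p) : fn n p = 0 := by
  obtain ⟨a, c⟩ := p
  unfold Pn at h
  push_neg at h
  unfold fn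
  by_cases hc : c < n - a - c
  · rw [if_pos hc]
    simp only at h
    by_cases ho : (n - a) % 2 = 1
    · -- then a = c or a = d
      have := h ho hc
      rcases eq_or_ne a c with hac | hac
      · rw [E_triple_zero (Or.inl hac), smul_zero]
      · have had := this hac
        rw [E_triple_zero (Or.inr (Or.inl had)), smul_zero]
    · have : (n - a) % 2 = 0 := by omega
      rw [even_cast this, zero_smul]
  · rw [if_neg hc]

lemma gn_step {n : ℕ} {p : ℕ × ℕ} (hp : Pn n p)
    (h1 : 1 ≤ p.1) (h2 : p.1 < n) (h3 : 1 ≤ p.2) (h4 : p.2 < n) :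
    (1 ≤ (gn n p).1 ∧ (gn n p).1 < n ∧ 1 ≤ (gn n p).2 ∧ (gn n p).2 < n) ∧
      fn n (gn n p) = fn n p ∧ gn n (gn n p) = p := by
  obtain ⟨a, c⟩ := p
  obtain ⟨hodd, hlt, hac, had⟩ := hp
  simp only at hodd hlt hac had h1 h2 h3 h4
  set d := n - a - c with hd
  have hsum : a + c + d = n := by omega
  have hd1 : 1 ≤ d := by omega
  have hdn : d < n := by omega
  rw [gn, if_pos ⟨hodd, hlt, hac, had⟩]
  by_cases hb : a % 2 = c % 2
  · -- swap a with d's partner: new pair (c, min a d)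
    rw [if_pos hb]
    set m := min a d with hm
    have hmval : m = a ∨ m = d := by omega
    have hMval : n - c - m = max a d := by omega
    have hQ : Pn n (c, m) := by
      refine ⟨by omega, by omega, by omega, by omega⟩
    have hfn : fn n (c, m) = fn n (a, c) := by
      unfold fn
      simp only
      rw [if_pos hQ.2.1, if_pos hlt]
      rw [odd_cast hodd, odd_cast hQ.1, one_smul, one_smul]
      rcases hmval with hmv | hmv
      · have h7 : n - c - a = d := by omega
        rw [hmv, h7]; exact E_perm_cad a c d
      · have h7 : n - c - d = a := by omega
        rw [hmv, h7]; exact E_perm_cda a c d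
    refine ⟨⟨by omega, by omega, by omega, by omega⟩, hfn, ?_⟩
    rw [gn, if_pos hQ]
    simp only
    rcases hmval with hmv | hmv
    · have hcm : c % 2 = m % 2 := by omega
      rw [if_pos hcm, hmv]
      have : min c (n - c - a) = c := by omega
      rw [this]
    · have hcm : ¬ (c % 2 = m % 2) := by omega
      rw [if_neg hcm]
      have h5 : n - c - m = a := by omega
      have h6 : min c m = c := by omega
      rw [h5, h6]
  · -- swap a with d: new pair (d, min a c)
    rw [if_neg hb]
    set m := min a c with hm
    have hmval : m = a ∨ m = c := by omega
    have hMval : n - d - m = max a c := by omega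
    have hQ : Pn n (d, m) := by
      refine ⟨by omega, by omega, by omega, by omega⟩
    have hfn : fn n (d, m) = fn n (a, c) := by
      unfold fn
      simp only
      rw [if_pos hQ.2.1, if_pos hlt]
      rw [odd_cast hodd, odd_cast hQ.1, one_smul, one_smul]
      rcases hmval with hmv | hmv
      · have h7 : n - d - a = c := by omega
        rw [hmv, h7]; exact E_perm_dac a c d
      · have h7 : n - d - c = a := by omega
        rw [hmv, h7]; exact E_perm_dca a c d
    refine ⟨⟨by omega, by omega, by omega, by omega⟩, hfn, ?_⟩
    rw [gn, if_pos hQ]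
    simp only
    rcases hmval with hmv | hmv
    · have hdm : d % 2 = m % 2 := by omega
      rw [if_pos hdm, hmv]
      have : min d (n - d - a) = c := by omega
      rw [this]
    · have hdm : ¬ (d % 2 = m % 2) := by omega
      rw [if_neg hdm]
      have h5 : n - d - m = a := by omega
      have h6 : min d m = c := by omega
      rw [h5, h6]

/-- over `Z/2`, for any `n`, `Σ_{a+b=n, a,b ≥ 1} e_a ∧ δ₁(e_b) = 0`. -/
theorem sum_e_wedge_delta (n : ℕ) :
    (∑ a ∈ Finset.Ico 1 n, E a * δE (n - a)) = 0 := by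
  have hstep : (∑ a ∈ Finset.Ico 1 n, E a * δE (n - a))
      = ∑ p ∈ Finset.Ico 1 n ×ˢ Finset.Ico 1 n, fn n p := by
    rw [Finset.sum_product]
    refine Finset.sum_congr rfl fun a ha => ?_
    rw [δE, Finset.mul_sum]
    have hsub : Finset.Ico 1 (n - a) ⊆ Finset.Ico 1 n :=
      Finset.Ico_subset_Ico le_rfl (Nat.sub_le n a)
    rw [← Finset.sum_subset hsub (fun c hc hc' => ?_)]
    · refine Finset.sum_congr rfl fun c hc => ?_
      rw [mul_ite, mul_zero, mul_smul_comm]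
      rfl
    · simp only [Finset.mem_Ico] at hc hc'
      have : ¬ (c < n - a - c) := by omega
      rw [fn, if_neg this]
  rw [hstep]
  refine Finset.sum_involution (fun p _ => gn n p) (fun p hp => ?_) (fun p hp hf => ?_)
    (fun p hp => ?_) (fun p hp => ?_)
  · -- fn p + fn (gn p) = 0
    show fn n p + fn n (gn n p) = 0
    simp only [Finset.mem_product, Finset.mem_Ico] at hp
    by_cases hP : Pn n p
    · obtain ⟨_, hfn, _⟩ := gn_step hP hp.1.1 hp.1.2 hp.2.1 hp.2.2
      rw [hfn]; exact lam_add_self _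
    · rw [fn_eq_zero hP, gn, if_neg hP, fn_eq_zero hP, add_zero]
  · -- gn p ≠ p when fn p ≠ 0
    show gn n p ≠ p
    have hP : Pn n p := by
      by_contra h
      exact hf (fn_eq_zero h)
    obtain ⟨a, c⟩ := p
    obtain ⟨hodd, hlt, hac, had⟩ := hP
    rw [gn, if_pos ⟨hodd, hlt, hac, had⟩]
    simp only at hodd hlt hac had
    by_cases hb : a % 2 = c % 2
    · rw [if_pos hb]
      intro h
      exact hac (congrArg Prod.fst h).symm
    · rw [if_neg hb]
      intro h
      exact had (congrArg Prod.fst h).symm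
  · -- gn p ∈ s
    show gn n p ∈ Finset.Ico 1 n ×ˢ Finset.Ico 1 n
    simp only [Finset.mem_product, Finset.mem_Ico] at hp ⊢
    by_cases hP : Pn n p
    · obtain ⟨⟨h1, h2, h3, h4⟩, _, _⟩ := gn_step hP hp.1.1 hp.1.2 hp.2.1 hp.2.2
      exact ⟨⟨h1, h2⟩, ⟨h3, h4⟩⟩
    · rw [gn, if_neg hP]; exact hp
  · -- gn (gn p) = p
    show gn n (gn n p) = p
    simp only [Finset.mem_product, Finset.mem_Ico] at hp
    by_cases hP : Pn n p
    · exact (gn_step hP hp.1.1 hp.1.2 hp.2.1 hp.2.2).2.2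
    · have hg : gn n p = p := by rw [gn, if_neg hP]
      rw [hg, hg]
end
end

section
/- Over Z/2, for every integer i ≥ 2, z(i) + Σ_{a=1}^{i−1} x(2a) ∧ y(i−a) = δ₁( Σ_{m=0}^{⌊(i−2)/2⌋} e_{2i−4m−3} ∧ e_{2i+4m+3} ), where z(i) := Σ_{r=0}^{i−2} δ₁(e_{2i−2r−1}) ∧ e_{2i+2r+1}, x(j) := e_{2j}, y(j) := Σ_{r=0}^{j−1} e_{2j−2r−1} ∧ e_{2j+2r+1}. -/
noncomputable section

/-- `x(j) = e_{2j}`. -/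
noncomputable def xC (j : ℕ) : Lam1 := E (2 * j)

/-- `y(j) = Σ_{r=0}^{j−1} e_{2j−2r−1} ∧ e_{2j+2r+1}`. -/
noncomputable def yC (j : ℕ) : Lam1 :=
  ∑ r ∈ Finset.range j, E (2 * j - 2 * r - 1) * E (2 * j + 2 * r + 1)

/-- `z(i) = Σ_{r=0}^{i−2} δ₁(e_{2i−2r−1}) ∧ e_{2i+2r+1}`. -/
noncomputable def zC (i : ℕ) : Lam1 :=
  ∑ r ∈ Finset.range (i - 1), δE (2 * i - 2 * r - 1) * E (2 * i + 2 * r + 1)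

lemma lam_eq_of_add_eq_zero {x y : Lam1} (h : x + y = 0) : x = y := by
  calc x = x + y + y := by rw [add_assoc, lam_add_self, add_zero]
    _ = y := by rw [h, zero_add]

lemma E_comm_s11 (a b : ℕ) : E a * E b = E b * E a := by
  by_cases ha : 1 ≤ a
  · by_cases hb : 1 ≤ b
    · simp only [E, dif_pos ha, dif_pos hb]
      exact lam_eq_of_add_eq_zero (ExteriorAlgebra.ι_add_mul_swap _ _)
    · simp [E, dif_neg hb]
  · simp [E, dif_neg ha]

lemma E_sq (a : ℕ) : E a * E a = 0 := by
  by_cases ha : 1 ≤ a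
  · simp only [E, dif_pos ha]
    exact ExteriorAlgebra.ι_sq_zero _
  · simp [E, dif_neg ha]

lemma E_mul3_swap (a b c : ℕ) : E a * (E b * E c) = (E b * E a) * E c := by
  rw [← mul_assoc, E_comm_s11 a b]

lemma E_mul3_rot (a b c : ℕ) : (E a * E b) * E c = (E a * E c) * E b := by
  rw [mul_assoc, E_comm_s11 b c, ← mul_assoc]

lemma ite_add_ite_lam (A B : Prop) [Decidable A] [Decidable B] (x : Lam1) :
    ((if A then x else 0) + (if B then x else 0)) =
      if (A ∧ ¬B) ∨ (B ∧ ¬A) then x else 0 := by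
  by_cases hA : A <;> by_cases hB : B <;> simp [hA, hB, lam_add_self x]

/-- For odd `n`, `δ₁(e_n)` re-indexed by the odd member of each pair. -/
lemma δE_odd (n : ℕ) (hn : n % 2 = 1) :
    δE n = ∑ s ∈ Finset.range (n / 2), E (n - (2 * s + 1)) * E (2 * s + 1) := by
  have hcast : (n : K2) = 1 := by
    rw [← ZMod.natCast_mod, hn, Nat.cast_one]
  have h1 : δE n = ∑ a ∈ Finset.Ico 1 n, (if a < n - a then E a * E (n - a) else 0) := by
    unfold δE
    refine Finset.sum_congr rfl fun a _ => ?_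
    rw [hcast, one_smul]
  rw [h1, ← Finset.sum_filter]
  refine Finset.sum_nbij' (fun a => if a % 2 = 1 then a / 2 else (n - a) / 2)
    (fun s => if 2 * s + 1 < n - (2 * s + 1) then 2 * s + 1 else n - (2 * s + 1))
    ?_ ?_ ?_ ?_ ?_
  · intro a ha
    simp only [Finset.mem_filter, Finset.mem_Ico] at ha
    simp only [Finset.mem_range]
    try dsimp only
    split_ifs <;> omega
  · intro s hs
    simp only [Finset.mem_range] at hs
    simp only [Finset.mem_filter, Finset.mem_Ico]
    try dsimp only
    split_ifs <;> omega
  · intro a ha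
    simp only [Finset.mem_filter, Finset.mem_Ico] at ha
    try dsimp only
    split_ifs <;> omega
  · intro s hs
    simp only [Finset.mem_range] at hs
    try dsimp only
    split_ifs <;> omega
  · intro a ha
    simp only [Finset.mem_filter, Finset.mem_Ico] at ha
    try dsimp only
    by_cases hpar : a % 2 = 1
    · rw [if_pos hpar]
      have e1 : 2 * (a / 2) + 1 = a := by omega
      rw [e1]
      exact E_comm_s11 _ _
    · rw [if_neg hpar]
      have e1 : 2 * ((n - a) / 2) + 1 = n - a := by omega
      have e2 : n - (n - a) = a := by omega
      rw [e1, e2]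

set_option maxHeartbeats 1600000 in
set_option synthInstance.maxHeartbeats 400000 in
/-- over `Z/2`, for `i ≥ 2`,
`z(i) + Σ_{a=1}^{i−1} x(2a) ∧ y(i−a)
  = δ₁( Σ_{m=0}^{⌊(i−2)/2⌋} e_{2i−4m−3} ∧ e_{2i+4m+3} )`,
the coboundary of the right-hand 2-cochain being computed by the Leibniz rule. -/
theorem z_eq_sum_x_even_wedge_y (i : ℕ) (hi : 2 ≤ i) :
    zC i + (∑ a ∈ Finset.Icc 1 (i - 1), xC (2 * a) * yC (i - a)) =
      ∑ m ∈ Finset.range ((i - 2) / 2 + 1),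
        (δE (2 * i - 4 * m - 3) * E (2 * i + 4 * m + 3)
          + E (2 * i - 4 * m - 3) * δE (2 * i + 4 * m + 3)) := by
  classical
  set g : ℕ × ℕ → Lam1 :=
    fun p => (E (4 * i - 2 * p.1 - 2 * p.2 - 2) * E (2 * p.1 + 1)) * E (2 * p.2 + 1) with hgdef
  set R : Finset (ℕ × ℕ) :=
    (Finset.range (2 * i) ×ˢ Finset.range (2 * i)).filter
      (fun p => p.1 + p.2 + 2 ≤ 2 * i) with hRdef
  have hmemR : ∀ p : ℕ × ℕ,
      p ∈ R ↔ p.1 < 2 * i ∧ p.2 < 2 * i ∧ p.1 + p.2 + 2 ≤ 2 * i := by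
    intro p
    simp [hRdef, Finset.mem_filter, Finset.mem_product, Finset.mem_range, and_assoc]
  have hgswap : ∀ s t : ℕ, g (t, s) = g (s, t) := by
    intro s t
    simp only [hgdef]
    have e1 : 4 * i - 2 * t - 2 * s - 2 = 4 * i - 2 * s - 2 * t - 2 := by omega
    rw [e1, E_mul3_rot]
  have hgdiag : ∀ s t : ℕ, s = t → g (s, t) = 0 := by
    intro s t h
    subst h
    simp only [hgdef]
    rw [mul_assoc, E_sq, mul_zero]
  -- Step 1 : z
  have hz : zC i = ∑ p ∈ R, (if i ≤ p.2 then g p else 0) := by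
    have h0 : zC i = ∑ r ∈ Finset.range (i - 1),
        ∑ s ∈ Finset.range ((2 * i - 2 * r - 1) / 2),
          (E ((2 * i - 2 * r - 1) - (2 * s + 1)) * E (2 * s + 1)) * E (2 * i + 2 * r + 1) := by
      unfold zC
      refine Finset.sum_congr rfl fun r hr => ?_
      rw [Finset.mem_range] at hr
      rw [δE_odd _ (by omega), Finset.sum_mul]
    have h1 : zC i = ∑ p ∈ R.filter (fun p => i ≤ p.2), g p := by
      rw [h0, Finset.sum_sigma']
      refine Finset.sum_nbij' (fun x => (x.2, i + x.1)) (fun p => ⟨p.2 - i, p.1⟩)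
        ?_ ?_ ?_ ?_ ?_
      · rintro ⟨r, s⟩ hx
        simp only [Finset.mem_sigma, Finset.mem_range] at hx
        simp only [Finset.mem_filter, hmemR]
        try dsimp only
        try dsimp only at hx
        omega
      · rintro ⟨s, t⟩ hp
        simp only [Finset.mem_filter, hmemR] at hp
        try dsimp only at hp
        simp only [Finset.mem_sigma, Finset.mem_range]
        try dsimp only at hp ⊢
        omega
      · rintro ⟨r, s⟩ hx
        simp only [Finset.mem_sigma, Finset.mem_range] at hx
        try dsimp only
        simp only [Sigma.ext_iff, heq_eq_eq, true_and, and_true]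
        try dsimp only
        omega
      · rintro ⟨s, t⟩ hp
        simp only [Finset.mem_filter, hmemR] at hp
        try dsimp only at hp
        simp only [Prod.mk.injEq, true_and, and_true]
        try dsimp only
        omega
      · rintro ⟨r, s⟩ hx
        simp only [Finset.mem_sigma, Finset.mem_range] at hx
        simp only [hgdef]
        try dsimp only
        have e1 : (2 * i - 2 * r - 1) - (2 * s + 1)
            = 4 * i - 2 * s - 2 * (i + r) - 2 := by omega
        have e2 : 2 * i + 2 * r + 1 = 2 * (i + r) + 1 := by omega
        rw [e1, e2]
    rw [h1, Finset.sum_filter]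
  -- Step 2 : the x∧y sum
  have hX : (∑ a ∈ Finset.Icc 1 (i - 1), xC (2 * a) * yC (i - a)) =
      ∑ p ∈ R, (if p.1 < p.2 ∧ (p.1 + p.2) % 2 = 1 then g p else 0) := by
    have h0 : (∑ a ∈ Finset.Icc 1 (i - 1), xC (2 * a) * yC (i - a)) =
        ∑ a ∈ Finset.Icc 1 (i - 1), ∑ r ∈ Finset.range (i - a),
          E (2 * (2 * a)) * (E (2 * (i - a) - 2 * r - 1) * E (2 * (i - a) + 2 * r + 1)) := by
      refine Finset.sum_congr rfl fun a ha => ?_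
      unfold xC yC
      rw [Finset.mul_sum]
    have h1 : (∑ a ∈ Finset.Icc 1 (i - 1), xC (2 * a) * yC (i - a)) =
        ∑ p ∈ R.filter (fun p => p.1 < p.2 ∧ (p.1 + p.2) % 2 = 1), g p := by
      rw [h0, Finset.sum_sigma']
      refine Finset.sum_nbij' (fun x => (i - x.1 - 1 - x.2, i - x.1 + x.2))
        (fun p => ⟨i - (p.1 + p.2 + 1) / 2, (p.2 - p.1) / 2⟩) ?_ ?_ ?_ ?_ ?_
      · rintro ⟨a, r⟩ hx
        simp only [Finset.mem_sigma, Finset.mem_Icc, Finset.mem_range] at hx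
        simp only [Finset.mem_filter, hmemR]
        try dsimp only
        try dsimp only at hx
        omega
      · rintro ⟨s, t⟩ hp
        simp only [Finset.mem_filter, hmemR] at hp
        try dsimp only at hp
        simp only [Finset.mem_sigma, Finset.mem_Icc, Finset.mem_range]
        try dsimp only at hp ⊢
        omega
      · rintro ⟨a, r⟩ hx
        simp only [Finset.mem_sigma, Finset.mem_Icc, Finset.mem_range] at hx
        try dsimp only
        simp only [Sigma.ext_iff, heq_eq_eq, true_and, and_true]
        try dsimp only
        omega
      · rintro ⟨s, t⟩ hp
        simp only [Finset.mem_filter, hmemR] at hp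
        try dsimp only at hp
        simp only [Prod.mk.injEq, true_and, and_true]
        try dsimp only
        omega
      · rintro ⟨a, r⟩ hx
        simp only [Finset.mem_sigma, Finset.mem_Icc, Finset.mem_range] at hx
        simp only [hgdef]
        try dsimp only
        rw [← mul_assoc]
        have e1 : 2 * (2 * a)
            = 4 * i - 2 * (i - a - 1 - r) - 2 * (i - a + r) - 2 := by omega
        have e2 : 2 * (i - a) - 2 * r - 1 = 2 * (i - a - 1 - r) + 1 := by omega
        have e3 : 2 * (i - a) + 2 * r + 1 = 2 * (i - a + r) + 1 := by omega
        rw [e1, e2, e3]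
    rw [h1, Finset.sum_filter]
  -- Step 3 : first half of the RHS
  have hR1 : (∑ m ∈ Finset.range ((i - 2) / 2 + 1),
        δE (2 * i - 4 * m - 3) * E (2 * i + 4 * m + 3)) =
      ∑ p ∈ R, (if i < p.2 ∧ (p.2 - i) % 2 = 1 then g p else 0) := by
    have h0 : (∑ m ∈ Finset.range ((i - 2) / 2 + 1),
          δE (2 * i - 4 * m - 3) * E (2 * i + 4 * m + 3)) =
        ∑ m ∈ Finset.range ((i - 2) / 2 + 1),
          ∑ s ∈ Finset.range ((2 * i - 4 * m - 3) / 2),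
            (E ((2 * i - 4 * m - 3) - (2 * s + 1)) * E (2 * s + 1))
              * E (2 * i + 4 * m + 3) := by
      refine Finset.sum_congr rfl fun m hm => ?_
      rw [Finset.mem_range] at hm
      rw [δE_odd _ (by omega), Finset.sum_mul]
    have h1 : (∑ m ∈ Finset.range ((i - 2) / 2 + 1),
          δE (2 * i - 4 * m - 3) * E (2 * i + 4 * m + 3)) =
        ∑ p ∈ R.filter (fun p => i < p.2 ∧ (p.2 - i) % 2 = 1), g p := by
      rw [h0, Finset.sum_sigma']
      refine Finset.sum_nbij' (fun x => (x.2, i + 2 * x.1 + 1))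
        (fun p => ⟨(p.2 - i) / 2, p.1⟩) ?_ ?_ ?_ ?_ ?_
      · rintro ⟨m, s⟩ hx
        simp only [Finset.mem_sigma, Finset.mem_range] at hx
        simp only [Finset.mem_filter, hmemR]
        try dsimp only
        try dsimp only at hx
        omega
      · rintro ⟨s, t⟩ hp
        simp only [Finset.mem_filter, hmemR] at hp
        try dsimp only at hp
        simp only [Finset.mem_sigma, Finset.mem_range]
        try dsimp only at hp ⊢
        omega
      · rintro ⟨m, s⟩ hx
        simp only [Finset.mem_sigma, Finset.mem_range] at hx
        try dsimp only
        simp only [Sigma.ext_iff, heq_eq_eq, true_and, and_true]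
        try dsimp only
        omega
      · rintro ⟨s, t⟩ hp
        simp only [Finset.mem_filter, hmemR] at hp
        try dsimp only at hp
        simp only [Prod.mk.injEq, true_and, and_true]
        try dsimp only
        omega
      · rintro ⟨m, s⟩ hx
        simp only [Finset.mem_sigma, Finset.mem_range] at hx
        simp only [hgdef]
        try dsimp only
        have e1 : (2 * i - 4 * m - 3) - (2 * s + 1)
            = 4 * i - 2 * s - 2 * (i + 2 * m + 1) - 2 := by omega
        have e2 : 2 * i + 4 * m + 3 = 2 * (i + 2 * m + 1) + 1 := by omega
        rw [e1, e2]
    rw [h1, Finset.sum_filter]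
  -- Step 4 : second half of the RHS
  have hR2 : (∑ m ∈ Finset.range ((i - 2) / 2 + 1),
        E (2 * i - 4 * m - 3) * δE (2 * i + 4 * m + 3)) =
      ∑ p ∈ R, (if p.1 + 2 ≤ i ∧ p.1 % 2 = i % 2 then g p else 0) := by
    have h0 : (∑ m ∈ Finset.range ((i - 2) / 2 + 1),
          E (2 * i - 4 * m - 3) * δE (2 * i + 4 * m + 3)) =
        ∑ m ∈ Finset.range ((i - 2) / 2 + 1),
          ∑ v ∈ Finset.range ((2 * i + 4 * m + 3) / 2),
            E (2 * i - 4 * m - 3)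
              * (E ((2 * i + 4 * m + 3) - (2 * v + 1)) * E (2 * v + 1)) := by
      refine Finset.sum_congr rfl fun m hm => ?_
      rw [Finset.mem_range] at hm
      rw [δE_odd _ (by omega), Finset.mul_sum]
    have h1 : (∑ m ∈ Finset.range ((i - 2) / 2 + 1),
          E (2 * i - 4 * m - 3) * δE (2 * i + 4 * m + 3)) =
        ∑ p ∈ R.filter (fun p => p.1 + 2 ≤ i ∧ p.1 % 2 = i % 2), g p := by
      rw [h0, Finset.sum_sigma']
      refine Finset.sum_nbij' (fun x => (i - 2 * x.1 - 2, x.2))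
        (fun p => ⟨(i - p.1 - 2) / 2, p.2⟩) ?_ ?_ ?_ ?_ ?_
      · rintro ⟨m, v⟩ hx
        simp only [Finset.mem_sigma, Finset.mem_range] at hx
        simp only [Finset.mem_filter, hmemR]
        try dsimp only
        try dsimp only at hx
        omega
      · rintro ⟨s, t⟩ hp
        simp only [Finset.mem_filter, hmemR] at hp
        try dsimp only at hp
        simp only [Finset.mem_sigma, Finset.mem_range]
        try dsimp only at hp ⊢
        omega
      · rintro ⟨m, v⟩ hx
        simp only [Finset.mem_sigma, Finset.mem_range] at hx
        try dsimp only
        simp only [Sigma.ext_iff, heq_eq_eq, true_and, and_true]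
        try dsimp only
        omega
      · rintro ⟨s, t⟩ hp
        simp only [Finset.mem_filter, hmemR] at hp
        try dsimp only at hp
        simp only [Prod.mk.injEq, true_and, and_true]
        try dsimp only
        omega
      · rintro ⟨m, v⟩ hx
        simp only [Finset.mem_sigma, Finset.mem_range] at hx
        simp only [hgdef]
        try dsimp only
        have e1 : 2 * i - 4 * m - 3 = 2 * (i - 2 * m - 2) + 1 := by omega
        have e2 : (2 * i + 4 * m + 3) - (2 * v + 1)
            = 4 * i - 2 * (i - 2 * m - 2) - 2 * v - 2 := by omega
        rw [e1, e2, E_mul3_swap]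
    rw [h1, Finset.sum_filter]
  -- Step 5 : split the second RHS indicator sum by the order of the two odd indices
  have hsplit : (∑ p ∈ R, (if p.1 + 2 ≤ i ∧ p.1 % 2 = i % 2 then g p else 0)) =
      (∑ p ∈ R, (if p.1 + 2 ≤ i ∧ p.1 % 2 = i % 2 ∧ p.1 < p.2 then g p else 0))
        + ∑ p ∈ R, (if p.1 + 2 ≤ i ∧ p.1 % 2 = i % 2 ∧ p.2 < p.1 then g p else 0) := by
    rw [← Finset.sum_add_distrib]
    refine Finset.sum_congr rfl fun p _ => ?_
    obtain ⟨s, t⟩ := p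
    try dsimp only
    rcases lt_trichotomy s t with h | h | h
    · have hC : ¬(s + 2 ≤ i ∧ s % 2 = i % 2 ∧ t < s) := by omega
      by_cases hc : s + 2 ≤ i ∧ s % 2 = i % 2
      · have hB : s + 2 ≤ i ∧ s % 2 = i % 2 ∧ s < t := ⟨hc.1, hc.2, h⟩
        rw [if_pos hc, if_pos hB, if_neg hC, add_zero]
      · have hB : ¬(s + 2 ≤ i ∧ s % 2 = i % 2 ∧ s < t) := by tauto
        rw [if_neg hc, if_neg hB, if_neg hC, add_zero]
    · rw [hgdiag s t h]
      simp
    · have hB : ¬(s + 2 ≤ i ∧ s % 2 = i % 2 ∧ s < t) := by omega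
      by_cases hc : s + 2 ≤ i ∧ s % 2 = i % 2
      · rw [if_pos hc, if_neg hB, if_pos ⟨hc.1, hc.2, h⟩, zero_add]
      · rw [if_neg hc, if_neg hB, if_neg (by tauto), add_zero]
  -- Step 6 : swap the reversed part
  have hswap : (∑ p ∈ R, (if p.1 + 2 ≤ i ∧ p.1 % 2 = i % 2 ∧ p.2 < p.1 then g p else 0)) =
      ∑ p ∈ R, (if p.2 + 2 ≤ i ∧ p.2 % 2 = i % 2 ∧ p.1 < p.2 then g p else 0) := by
    refine Finset.sum_nbij' (fun p => (p.2, p.1)) (fun p => (p.2, p.1)) ?_ ?_ ?_ ?_ ?_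
    · rintro ⟨s, t⟩ hp
      simp only [hmemR] at hp ⊢
      try dsimp only at hp ⊢
      omega
    · rintro ⟨s, t⟩ hp
      simp only [hmemR] at hp ⊢
      try dsimp only at hp ⊢
      omega
    · rintro ⟨s, t⟩ _
      rfl
    · rintro ⟨s, t⟩ _
      rfl
    · rintro ⟨s, t⟩ _
      try dsimp only
      rw [hgswap]
  -- Step 7 : put everything together pointwise
  rw [hz, hX, Finset.sum_add_distrib, hR1, hR2, hsplit, hswap,
    ← Finset.sum_add_distrib, ← Finset.sum_add_distrib, ← Finset.sum_add_distrib]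
  refine Finset.sum_congr rfl fun p hp => ?_
  rw [hmemR] at hp
  obtain ⟨s, t⟩ := p
  try dsimp only at hp
  try dsimp only
  rw [ite_add_ite_lam, ite_add_ite_lam, ite_add_ite_lam]
  refine if_congr ?_ rfl rfl
  omega
end
end

section
/- The number of special k-partitions of length q equals the binomial coefficient C(q+k−1, k−1). -/
/-!
Subtracting `k` identifies special `k`-partitions of length `q` with the regular `q`-subsets of
`{0, …, k + 2q - 3}`. Regular `q`-subsets of `range n` number `C(n + 1 - q, q)`: splitting on
whether `n - 1` belongs to the subset gives Pascal's recursion, because removing `n - 1` leaves a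
regular subset of `range (n - 2)`. With `n = k + 2q - 2` this is `C(q + k - 1, q)`.
-/

open Finset

namespace KPartition

def Regular (s : Finset ℕ) : Prop := ∀ a ∈ s, ∀ b ∈ s, a < b → a + 2 ≤ b

instance : DecidablePred Regular := fun s => by unfold Regular; infer_instance

def regularSets (n q : ℕ) : Finset (Finset ℕ) := (powersetCard q (range n)).filter Regular

theorem regular_map_addRightEmbedding (k : ℕ) (s : Finset ℕ) :
    Regular (s.map (addRightEmbedding k)) ↔ Regular s := by
  simp only [Regular, forall_mem_map, addRightEmbedding_apply, add_lt_add_iff_right]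
  grind

theorem regular_insert_iff {n : ℕ} {t : Finset ℕ} (ht : ∀ a ∈ t, a < n) :
    Regular (insert n t) ↔ Regular t ∧ ∀ a ∈ t, a + 2 ≤ n := by
  simp only [Regular, forall_mem_insert]
  grind

theorem insert_mem_regularSets_iff {n q : ℕ} {t : Finset ℕ} (hn : n ∉ t) :
    insert n t ∈ regularSets (n + 1) (q + 1) ↔ t ∈ regularSets (n - 1) q := by
  simp only [regularSets, mem_filter, mem_powersetCard, card_insert_of_notMem hn,
    add_left_inj, insert_subset_iff, mem_range, lt_add_one, true_and]
  constructor
  · rintro ⟨⟨ht, hcard⟩, hreg⟩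
    have ht' : ∀ a ∈ t, a < n := fun a ha =>
      lt_of_le_of_ne (Nat.le_of_lt_succ (mem_range.1 (ht ha))) (ne_of_mem_of_not_mem ha hn)
    obtain ⟨hreg, hgap⟩ := (regular_insert_iff ht').1 hreg
    exact ⟨⟨fun a ha => mem_range.2 (by have := hgap a ha; omega), hcard⟩, hreg⟩
  · rintro ⟨⟨ht, hcard⟩, hreg⟩
    have ht' : ∀ a ∈ t, a < n := fun a ha => by have := mem_range.1 (ht ha); omega
    refine ⟨⟨fun a ha => mem_range.2 ((ht' a ha).trans (lt_add_one n)), hcard⟩, ?_⟩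
    exact (regular_insert_iff ht').2 ⟨hreg, fun a ha => by have := mem_range.1 (ht ha); omega⟩

theorem card_regularSets_succ (n q : ℕ) :
    #(regularSets (n + 1) (q + 1)) = #(regularSets n (q + 1)) + #(regularSets (n - 1) q) := by
  rw [← card_filter_add_card_filter_not (p := (n ∈ ·)), add_comm]
  congr 1
  · congr 1
    ext s
    simp only [regularSets, mem_filter, mem_powersetCard, range_add_one]
    constructor
    · rintro ⟨⟨⟨hs, hcard⟩, hreg⟩, hn⟩
      exact ⟨⟨(subset_insert_iff_of_notMem hn).1 hs, hcard⟩, hreg⟩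
    · rintro ⟨⟨hs, hcard⟩, hreg⟩
      exact ⟨⟨⟨hs.trans (subset_insert _ _), hcard⟩, hreg⟩, fun hn => by simpa using hs hn⟩
  · have hn : ∀ t ∈ regularSets (n - 1) q, n ∉ t := fun t ht hnt => by
      have := mem_range.1 ((mem_powersetCard.1 (mem_filter.1 ht).1).1 hnt)
      omega
    refine card_nbij' (erase · n) (insert n) (fun s hs => ?_) (fun t ht => ?_)
      (fun s hs => insert_erase (mem_filter.1 hs).2) (fun t ht => erase_insert (hn t ht))
    · rw [mem_coe, mem_filter] at hs
      rw [mem_coe, ← insert_mem_regularSets_iff (notMem_erase n s), insert_erase hs.2]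
      exact hs.1
    · exact mem_filter.2 ⟨(insert_mem_regularSets_iff (hn t ht)).2 ht, mem_insert_self n t⟩

theorem card_regularSets (n q : ℕ) : #(regularSets n q) = (n + 1 - q).choose q := by
  induction n using Nat.strong_induction_on generalizing q with
  | _ n ih =>
  rcases q with _ | q
  · simp [regularSets, filter_singleton, Regular]
  rcases n with _ | n
  · simp [regularSets]
  rw [card_regularSets_succ, ih n (by omega), ih (n - 1) (by omega)]
  obtain h | ⟨rfl, rfl⟩ | ⟨hq, hn⟩ : n < q ∨ (n = 0 ∧ q = 0) ∨ (q ≤ n ∧ 1 ≤ n) := by omega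
  · rw [show n + 1 + 1 - (q + 1) = 0 by omega, show n + 1 - (q + 1) = 0 by omega,
      show n - 1 + 1 - q = 0 by omega, Nat.choose_zero_succ, zero_add,
      Nat.choose_eq_zero_of_lt (by omega)]
  · rfl
  · rw [show n + 1 + 1 - (q + 1) = n - q + 1 by omega, show n - 1 + 1 - q = n - q by omega,
      show n + 1 - (q + 1) = n - q by omega, Nat.choose_succ_succ', add_comm]

theorem map_addRightEmbedding_range_sub (k N : ℕ) :
    (range (N - k)).map (addRightEmbedding k) = Ico k N := by
  ext x
  simp only [mem_map, mem_range, addRightEmbedding_apply, mem_Ico]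
  constructor
  · rintro ⟨a, ha, rfl⟩
    omega
  · exact fun h => ⟨x - k, by omega, by omega⟩

theorem filter_regular_powersetCard_Ico (k N q : ℕ) :
    (powersetCard q (Ico k N)).filter Regular =
      (regularSets (N - k) q).map (mapEmbedding (addRightEmbedding k)).toEmbedding := by
  rw [← map_addRightEmbedding_range_sub, powersetCard_map, filter_map, regularSets]
  congr 2
  exact funext fun s => propext (regular_map_addRightEmbedding k s)

end KPartition

/-- for integers `k ≥ 1` and `q ≥ 0`, the number of special
`k`-partitions of length `q` — i.e. finite sets `s` of integers of cardinality `q`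
with all elements `≥ k`, any two distinct elements differing by at least `2`
(regularity), and all elements `< 2(k+q−1)` — equals `C(q+k−1, k−1)`. -/
theorem card_special_k_partitions (k q : ℕ) (hk : 1 ≤ k) :
    {s : Finset ℕ | s.card = q ∧ (∀ i ∈ s, k ≤ i) ∧
        (∀ a ∈ s, ∀ b ∈ s, a < b → a + 2 ≤ b) ∧
        (∀ i ∈ s, i < 2 * (k + q - 1))}.ncard
      = Nat.choose (q + k - 1) (k - 1) := by
  have hspecial : {s : Finset ℕ | s.card = q ∧ (∀ i ∈ s, k ≤ i) ∧
      (∀ a ∈ s, ∀ b ∈ s, a < b → a + 2 ≤ b) ∧ (∀ i ∈ s, i < 2 * (k + q - 1))} =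
      ↑((powersetCard q (Ico k (2 * (k + q - 1)))).filter KPartition.Regular) := by
    ext s
    simp only [Set.mem_ofPred_eq, coe_filter, mem_powersetCard, subset_iff, mem_Ico,
      KPartition.Regular]
    grind
  rw [hspecial, Set.ncard_coe_finset, KPartition.filter_regular_powersetCard_Ico, card_map,
    KPartition.card_regularSets]
  rcases q with _ | q
  · simp
  · rw [show 2 * (k + (q + 1) - 1) - k + 1 - (q + 1) = (q + 1) + (k - 1) by omega,
      show q + 1 + k - 1 = (q + 1) + (k - 1) by omega, Nat.choose_symm_add]
end

section
/- Over Z/2, for n ≡ 0 mod 4, the 2-cochain v(n) := Σ_{r=0}^{n/4} e_{n/2 − 2r − 1} ∧ e_{n/2 + 2r + 1} is a cocycle of the Chevalley–Eilenberg complex of L_{−1} = W(Z/2), i.e., δ_{−1}(v(n)) = 0. -/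
noncomputable section

/-- The free `Z/2`-module on basis `(e_i)_{i ≥ -1}` (underlying `W(Z/2) = L_{-1}`). -/
abbrev Vm := {i : ℤ // -1 ≤ i} →₀ K2

/-- The exterior algebra of cochains of `L_{-1}`. -/
abbrev Lamm := ExteriorAlgebra K2 Vm

/-- The generator `e_i`, `i ≥ -1` (defined to be `0` for irrelevant `i < -1`). -/
noncomputable def Em (i : ℤ) : Lamm :=
  if h : -1 ≤ i then ExteriorAlgebra.ι K2 (Finsupp.single (⟨i, h⟩ : {i : ℤ // -1 ≤ i}) 1)
  else 0

/-- `δ₋₁(e_i) = Σ_{c+d=i, −1 ≤ c < d} (c+d) e_c ∧ e_d`, coefficients mod 2. -/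
noncomputable def δm (i : ℤ) : Lamm :=
  ∑ c ∈ Finset.Icc (-1 : ℤ) i, if c < i - c then (i : K2) • (Em c * Em (i - c)) else 0

/-!
Over `Z/2` the generators `e_i` commute and square to zero. For odd `m` exactly one member of
each pair `{c, m - c}` in `δ(e_m)` is odd, so `δ(e_m) = Σ e_c e_{m-c}` over all odd `c ≥ -1`
(terms with `m - c < -1` vanish since `Em` is `0` there). The pairs `(a, b)` of `v(n)` run over
all odd `a` with `a + b = n`, hence
`δ v(n) = Σ_{x odd} δ(e_{n-x}) e_x = Σ_{x, c odd} e_c e_{n-x-c} e_x`: a double sum over one index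
set whose summand is symmetric in `(x, c)` and zero on the diagonal, which vanishes in
characteristic `2`.
-/

open Finset

theorem Finset.sum_sum_eq_zero_of_alternating {α M : Type*} [AddCommMonoid M] (s : Finset α)
    (F : α → α → M) (h_swap : ∀ x y, F x y + F y x = 0) (h_diag : ∀ x, F x x = 0) :
    ∑ x ∈ s, ∑ y ∈ s, F x y = 0 := by
  rw [← sum_product']
  refine sum_involution (fun p _ => p.swap) (fun p _ => h_swap p.1 p.2) ?_
    (fun p hp => mem_product.2 (mem_product.1 hp).symm) (fun _ _ => rfl)
  rintro ⟨x, y⟩ - hF hxy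
  cases congrArg Prod.fst hxy
  exact hF (h_diag x)

lemma Em_of_lt {i : ℤ} (hi : i < -1) : Em i = 0 :=
  dif_neg (not_le.2 hi)

lemma Em_mul_self (i : ℤ) : Em i * Em i = 0 := by
  unfold Em
  split
  · exact ExteriorAlgebra.ι_sq_zero _
  · exact zero_mul 0

lemma Em_mul_comm (i j : ℤ) : Em i * Em j = Em j * Em i := by
  unfold Em
  split <;> split
  · rw [← ZModModule.neg_eq_self (_ * _)]
    exact neg_eq_of_add_eq_zero_left (ExteriorAlgebra.ι_add_mul_swap _ _)
  all_goals simp only [zero_mul, mul_zero]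

lemma Em_mul_mul_self (x w : ℤ) : Em x * Em w * Em x = 0 := by
  rw [Em_mul_comm x, mul_assoc, Em_mul_self, mul_zero]

lemma Em_mul_mul_add_swap (x w y : ℤ) : Em x * Em w * Em y + Em y * Em w * Em x = 0 := by
  rw [Em_mul_comm x, mul_assoc, Em_mul_comm x, ← mul_assoc, Em_mul_comm w]
  exact ZModModule.add_self _

lemma Em_mul_δm_comm (a b : ℤ) : Em a * δm b = δm b * Em a := by
  refine (Commute.sum_right _ _ _ fun c _ => ?_).eq
  split_ifs
  · refine (Commute.mul_right ?_ ?_).smul_right _ <;> exact Em_mul_comm _ _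
  · exact Commute.zero_right _

lemma δm_eq_sum_filter_odd {m : ℤ} (hm : Odd m) {N : ℤ} (hN : m ≤ N) :
    δm m = ∑ c ∈ Icc (-1) N with Odd c, Em c * Em (m - c) := by
  have hcoeff : (m : K2) = 1 := (ZMod.intCast_eq_one_iff_odd).2 hm
  have hodd : ∀ c : ℤ, Odd c ↔ c % 2 = 1 := fun c => Int.odd_iff
  have hm' := (hodd m).1 hm
  calc δm m = ∑ c ∈ Icc (-1) m with c < m - c, Em c * Em (m - c) := by
        simp only [δm, hcoeff, one_smul, sum_filter]
    _ = ∑ c ∈ Icc (-1) m with Odd c, Em c * Em (m - c) := by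
        -- `c ↦` the odd one of `c` and `m - c`
        refine sum_nbij' (fun c => if Odd c then c else m - c)
          (fun c => if c < m - c then c else m - c) ?_ ?_ ?_ ?_ fun c _ => ?_
        rotate_right
        · split_ifs
          exacts [rfl, by rw [sub_sub_cancel, Em_mul_comm]]
        all_goals
          intro c hc
          simp only [mem_filter, mem_Icc, hodd] at hc ⊢
          split_ifs <;> omega
    _ = ∑ c ∈ Icc (-1) N with Odd c, Em c * Em (m - c) := by
        refine sum_subset (filter_subset_filter _ (Icc_subset_Icc_right hN)) fun c hcN hcm => ?_
        simp only [mem_filter, mem_Icc, hodd] at hcN hcm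
        rw [Em_of_lt (i := m - c) (by omega), mul_zero]

lemma sum_filter_odd_Icc_eq_sum_range (q : ℕ) {M : Type*} [AddCommMonoid M] (f : ℤ → M) :
    ∑ m ∈ Icc (-1 : ℤ) (4 * q + 1) with Odd m, f m
      = ∑ r ∈ range (q + 1), (f (2 * q - 2 * r - 1) + f (2 * q + 2 * r + 1)) := by
  rw [sum_add_distrib, ← sum_filter_add_sum_filter_not _ (· < (2 * q : ℤ))]
  congr 1
  · refine (sum_nbij' (fun r : ℕ => (2 * q - 2 * r - 1 : ℤ))
      (fun m : ℤ => ((2 * q - 1 - m) / 2).toNat) ?_ ?_ ?_ ?_ fun _ _ => rfl).symm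
    all_goals
      intro x hx
      simp only [mem_filter, mem_Icc, mem_range, Int.odd_iff] at hx ⊢
      omega
  · refine (sum_nbij' (fun r : ℕ => (2 * q + 2 * r + 1 : ℤ))
      (fun m : ℤ => ((m - 2 * q - 1) / 2).toNat) ?_ ?_ ?_ ?_ fun _ _ => rfl).symm
    all_goals
      intro x hx
      simp only [mem_filter, mem_Icc, mem_range, Int.odd_iff] at hx ⊢
      omega

/-- over `Z/2`, for `n ≡ 0 (mod 4)`, the 2-cochain
`v(n) = Σ_{r=0}^{n/4} e_{n/2−2r−1} ∧ e_{n/2+2r+1}` is a cocycle of the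
Chevalley–Eilenberg complex of `L_{−1} = W(Z/2)`: its coboundary
(computed by the Leibniz rule) vanishes. -/
theorem v_is_cocycle (n : ℕ) (hn : n % 4 = 0) :
    (∑ r ∈ Finset.range (n / 4 + 1),
      (δm ((n : ℤ) / 2 - 2 * r - 1) * Em ((n : ℤ) / 2 + 2 * r + 1)
        + Em ((n : ℤ) / 2 - 2 * r - 1) * δm ((n : ℤ) / 2 + 2 * r + 1))) = 0 := by
  obtain ⟨q, rfl⟩ : ∃ q, n = 4 * q := ⟨n / 4, by omega⟩
  have hhalf : ((4 * q : ℕ) : ℤ) / 2 = 2 * q := by omega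
  calc _ = ∑ x ∈ Icc (-1 : ℤ) (4 * q + 1) with Odd x, δm (4 * q - x) * Em x := by
        rw [sum_filter_odd_Icc_eq_sum_range, Nat.mul_div_cancel_left q (by norm_num), hhalf]
        refine sum_congr rfl fun r _ => ?_
        rw [Em_mul_δm_comm, add_comm]
        congr 3 <;> ring
    _ = ∑ x ∈ Icc (-1 : ℤ) (4 * q + 1) with Odd x,
          ∑ c ∈ Icc (-1 : ℤ) (4 * q + 1) with Odd c, Em c * Em (4 * q - x - c) * Em x := by
        refine sum_congr rfl fun x hx => ?_
        simp only [mem_filter, mem_Icc, Int.odd_iff] at hx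
        rw [δm_eq_sum_filter_odd (N := 4 * q + 1) (Int.odd_iff.2 (by omega)) (by omega), sum_mul]
    _ = 0 := sum_sum_eq_zero_of_alternating _ _
        (fun x c => by rw [sub_right_comm]; exact Em_mul_mul_add_swap _ _ _)
        (fun _ => Em_mul_mul_self _ _)
end
end

section
/- Over Z/2, the adjoint action of e_{−1} on cochains, given by e_{r}·(e_{i1}∧…∧e_{iq}) = Σ_a i_a e_{i1}∧…∧e_{i_a − r}∧…∧e_{iq} with r = −1, satisfies: for odd a ≥ 1, e_{−1}·(Σ_{r=0}^{(a−1)/2} e_{a−2r} ∧ e_{a+2r+2}) = δ₁(e_{2a+3}) in the exterior algebra over Z/2. -/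
noncomputable section

/-- The action of `e_{−1}` on a generator: `e_{−1}·e_j = j·e_{j+1}` (mod 2). -/
noncomputable def ρE (j : ℕ) : Lam1 := (j : K2) • E (j + 1)

lemma sum_pair {M : Type*} [AddCommMonoid M] (f : ℕ → M) (n : ℕ) :
    ∑ c ∈ Finset.range (2*n), f c = ∑ r ∈ Finset.range n, (f (2*r) + f (2*r+1)) := by
  induction n with
  | zero => simp
  | succ n ih =>
    rw [show 2*(n+1) = 2*n+1+1 by ring, Finset.sum_range_succ, Finset.sum_range_succ,
      ih, Finset.sum_range_succ, ← add_assoc]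

lemma cast_odd (n : ℕ) (h : n % 2 = 1) : ((n : ℕ) : K2) = 1 := by
  rw [← ZMod.natCast_mod n 2, h, Nat.cast_one]

/-- over `Z/2`, for odd `a ≥ 1`, the derivation action of `e_{−1}`
on `Σ_{r=0}^{(a−1)/2} e_{a−2r} ∧ e_{a+2r+2}` (computed by the Leibniz rule)
equals `δ₁(e_{2a+3})`. -/
theorem e_minus_one_action (a : ℕ) (ha : 1 ≤ a) (hodd : Odd a) :
    (∑ r ∈ Finset.range ((a - 1) / 2 + 1),
      (ρE (a - 2 * r) * E (a + 2 * r + 2) + E (a - 2 * r) * ρE (a + 2 * r + 2))) =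
      δE (2 * a + 3) := by
  obtain ⟨k, rfl⟩ : ∃ k, a = 2*k+1 := by
    obtain ⟨k, hk⟩ := hodd; exact ⟨k, by omega⟩
  have hdiv : (2*k+1-1)/2 = k := by omega
  rw [hdiv]
  simp only [δE]
  rw [← Finset.sum_Ico_consecutive _ (show 1 ≤ 2*k+3 by omega)
    (show 2*k+3 ≤ 2*(2*k+1)+3 by omega)]
  have hz : (∑ c ∈ Finset.Ico (2*k+3) (2*(2*k+1)+3),
      if c < 2*(2*k+1)+3 - c then ((2*(2*k+1)+3 : ℕ) : K2) • (E c * E (2*(2*k+1)+3 - c))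
      else 0) = 0 := by
    apply Finset.sum_eq_zero
    intro c hc
    simp only [Finset.mem_Ico] at hc
    rw [if_neg (by omega)]
  rw [hz, add_zero, Finset.sum_Ico_eq_sum_range, show 2*k+3-1 = 2*(k+1) by omega, sum_pair,
    ← Finset.sum_range_reflect
      (fun r => ρE (2*k+1 - 2*r) * E (2*k+1 + 2*r + 2) + E (2*k+1 - 2*r) * ρE (2*k+1 + 2*r + 2))
      (k+1)]
  apply Finset.sum_congr rfl
  intro r hr
  simp only [Finset.mem_range] at hr
  obtain ⟨m, rfl⟩ : ∃ m, k = r + m := ⟨k - r, by omega⟩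
  rw [show 2*(r+m)+1 - 2*(r+m+1-1-r) = 2*r+1 by omega,
    show 2*(r+m)+1 + 2*(r+m+1-1-r) + 2 = 2*r+4*m+3 by omega,
    show 2*(2*(r+m)+1)+3 - (1+2*r) = 2*r+4*m+4 by omega,
    show 2*(2*(r+m)+1)+3 - (1+(2*r+1)) = 2*r+4*m+3 by omega,
    if_pos (by omega : 1+2*r < 2*r+4*m+4), if_pos (by omega : 1+(2*r+1) < 2*r+4*m+3)]
  simp only [ρE]
  rw [cast_odd (2*r+1) (by omega), cast_odd (2*r+4*m+3) (by omega),
    cast_odd (2*(2*(r+m)+1)+3) (by omega), one_smul, one_smul, one_smul, one_smul,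
    show 2*r+1+1 = 1+(2*r+1) by omega, show 2*r+4*m+3+1 = 2*r+4*m+4 by omega,
    show 2*r+1 = 1+2*r by omega]
  exact add_comm _ _
end
end
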